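/- Inverse property of the density-operator Radon–Nikodym derivative: let ρ and σ be positive semidefinite Hermitian K×K complex matrices with ρ ≈ σ. Then for every K×K complex matrix X, φ(ρ,σ)[φ(σ,ρ)[X]] = Π_+(ρ) X Π_+(ρ), where Π_+(ρ) is the orthogonal projection onto the range of ρ. In particular, φ(ρ,σ)[φ(σ,ρ)[τ]] = τ for every Hermitian K×K matrix τ with τ ≪ ρ. -/

import Mathlib

open Matrix
open scoped ComplexOrder

/-- A density operator: positive semidefinite (hence Hermitian) with trace 1. -/
def IsDensityOp {K : ℕ} (ρ : Matrix (Fin K) (Fin K) ℂ) : Prop :=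
  ρ.PosSemidef ∧ ρ.trace = 1

/-- σ ≪ ρ : every null vector of ρ is a null vector of σ. -/
def AbsCont {K : ℕ} (σ ρ : Matrix (Fin K) (Fin K) ℂ) : Prop :=
  ∀ ψ : Fin K → ℂ, ρ *ᵥ ψ = 0 → σ *ᵥ ψ = 0

/-- ρ ≈ σ : mutual absolute continuity. -/
def EquivDO {K : ℕ} (ρ σ : Matrix (Fin K) (Fin K) ℂ) : Prop := AbsCont σ ρ ∧ AbsCont ρ σ

/-- ρ^{-1/2}: the Moore–Penrose pseudoinverse of the positive semidefinite square root
ρ^{1/2} of a positive semidefinite Hermitian matrix ρ, via the spectral decomposition. -/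
noncomputable def invSqrt {K : ℕ} (ρ : Matrix (Fin K) (Fin K) ℂ) (hρ : ρ.IsHermitian) :
    Matrix (Fin K) (Fin K) ℂ :=
  (hρ.eigenvectorUnitary : Matrix (Fin K) (Fin K) ℂ) *
    Matrix.diagonal (fun i => ((Real.sqrt (hρ.eigenvalues i))⁻¹ : ℂ)) *
    star (hρ.eigenvectorUnitary : Matrix (Fin K) (Fin K) ℂ)

/-- The positive semidefinite square root, as `Matrix.PosSemidef.sqrt` was defined in the older Mathlib. -/
noncomputable def posSemidefSqrt {K : ℕ} {A : Matrix (Fin K) (Fin K) ℂ} (hA : A.PosSemidef) :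
    Matrix (Fin K) (Fin K) ℂ :=
  (hA.1.eigenvectorUnitary : Matrix (Fin K) (Fin K) ℂ) *
    Matrix.diagonal ((↑) ∘ Real.sqrt ∘ hA.1.eigenvalues) *
    star (hA.1.eigenvectorUnitary : Matrix (Fin K) (Fin K) ℂ)

/-- The density-operator Radon–Nikodym derivative φ(σ,ρ)[X] = σ^{1/2} ρ^{-1/2} X ρ^{-1/2} σ^{1/2}. -/
noncomputable def rnDeriv {K : ℕ} (σ ρ : Matrix (Fin K) (Fin K) ℂ)
    (hσ : σ.PosSemidef) (hρ : ρ.PosSemidef) (X : Matrix (Fin K) (Fin K) ℂ) :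
    Matrix (Fin K) (Fin K) ℂ :=
  posSemidefSqrt hσ * invSqrt ρ hρ.1 * X * invSqrt ρ hρ.1 * posSemidefSqrt hσ

/-- Π_+(ρ): the orthogonal projection onto the range of the Hermitian matrix ρ,
via the spectral decomposition. -/
noncomputable def rangeProj {K : ℕ} (ρ : Matrix (Fin K) (Fin K) ℂ) (hρ : ρ.IsHermitian) :
    Matrix (Fin K) (Fin K) ℂ :=
  (hρ.eigenvectorUnitary : Matrix (Fin K) (Fin K) ℂ) *
    Matrix.diagonal (fun i => if hρ.eigenvalues i = 0 then (0 : ℂ) else 1) *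
    star (hρ.eigenvectorUnitary : Matrix (Fin K) (Fin K) ℂ)

/-! Every matrix here is a function of ρ or of σ in the continuous functional calculus, so
`ρ^{1/2} ρ^{-1/2} = ρ^{-1/2} ρ^{1/2} = Π₊(ρ)` and likewise for σ. Expanding the composite gives
`ρ^{1/2} Π₊(σ) ρ^{-1/2} X ρ^{-1/2} Π₊(σ) ρ^{1/2}`. As `ker σ ⊆ ker ρ = ker ρ^{1/2}`, the projection
`Π₊(σ)` is absorbed by `ρ^{1/2}` on either side, leaving `Π₊(ρ) X Π₊(ρ)`; and a Hermitian τ with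
`ker ρ ⊆ ker τ` is fixed by compression with `Π₊(ρ)` for the same reason. -/

theorem Matrix.mul_eq_zero_of_ker_le {R k l m n : Type*} [Semiring R] [Fintype m] [Fintype n]
    {A : Matrix l m R} {M : Matrix k m R} {B : Matrix m n R}
    (hker : ∀ ψ, A *ᵥ ψ = 0 → M *ᵥ ψ = 0) (h : A * B = 0) : M * B = 0 :=
  ext_iff_mulVec.2 fun v => by
    rw [← mulVec_mulVec, hker _ (by rw [mulVec_mulVec, h, zero_mulVec]), zero_mulVec]

theorem Matrix.IsHermitian.mulVec_eq_zero_of_mul_self_mulVec_eq_zero {R n : Type*} [Fintype n]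
    [PartialOrder R] [Ring R] [StarRing R] [StarOrderedRing R] [NoZeroDivisors R]
    {S : Matrix n n R} {ψ : n → R} (hS : S.IsHermitian) (h : (S * S) *ᵥ ψ = 0) :
    S *ᵥ ψ = 0 := by
  rw [← dotProduct_star_self_eq_zero, star_mulVec, ← dotProduct_mulVec, mulVec_mulVec, hS.eq, h,
    dotProduct_zero]

theorem Matrix.IsHermitian.mul_eq_right_of_mul_eq_left {R n : Type*} [Fintype n]
    [NonUnitalSemiring R] [StarRing R] {M P : Matrix n n R} (hM : M.IsHermitian)
    (hP : P.IsHermitian) (h : M * P = M) : P * M = M := by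
  simpa only [conjTranspose_mul, hM.eq, hP.eq] using congrArg (·ᴴ) h

section SpectralCalculus

variable {𝕜 n : Type*} [RCLike 𝕜] [Fintype n] [DecidableEq n] {A : Matrix n n 𝕜}

theorem Matrix.continuousOn_spectrum (A : Matrix n n 𝕜) (f : ℝ → ℝ) :
    ContinuousOn f (spectrum ℝ A) :=
  A.finite_real_spectrum.continuousOn f

theorem Matrix.PosSemidef.nonneg_of_mem_spectrum (hA : A.PosSemidef) {x : ℝ}
    (hx : x ∈ spectrum ℝ A) : 0 ≤ x := by
  obtain ⟨i, rfl⟩ := hA.1.spectrum_real_eq_range_eigenvalues ▸ hx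
  exact hA.eigenvalues_nonneg i

theorem Matrix.PosSemidef.cfc_sqrt_mul_self (hA : A.PosSemidef) :
    cfc Real.sqrt A * cfc Real.sqrt A = A := by
  rw [← cfc_mul _ _ A (A.continuousOn_spectrum _) (A.continuousOn_spectrum _)]
  conv_rhs => rw [← cfc_id' ℝ A hA.1.isSelfAdjoint]
  exact cfc_congr fun x hx => Real.mul_self_sqrt (hA.nonneg_of_mem_spectrum hx)

end SpectralCalculus

theorem AbsCont.trans {K : ℕ} {A B C : Matrix (Fin K) (Fin K) ℂ} (hAB : AbsCont A B)
    (hBC : AbsCont B C) : AbsCont A C :=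
  fun ψ hψ => hAB ψ (hBC ψ hψ)

section SpectralDefs

variable {K : ℕ} {A : Matrix (Fin K) (Fin K) ℂ}

theorem posSemidefSqrt_eq_cfc (hA : A.PosSemidef) : posSemidefSqrt hA = cfc Real.sqrt A := by
  rw [hA.1.cfc_eq, IsHermitian.cfc, Unitary.conjStarAlgAut_apply]
  rfl

theorem invSqrt_eq_cfc (hA : A.IsHermitian) : invSqrt A hA = cfc (fun x => (√x)⁻¹) A := by
  rw [hA.cfc_eq, IsHermitian.cfc, Unitary.conjStarAlgAut_apply, invSqrt]
  congr
  ext i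
  simp

theorem rangeProj_eq_cfc (hA : A.IsHermitian) :
    rangeProj A hA = cfc (fun x : ℝ => if x = 0 then 0 else 1) A := by
  rw [hA.cfc_eq, IsHermitian.cfc, Unitary.conjStarAlgAut_apply, rangeProj]
  congr
  ext i
  split_ifs with h <;> simp [h]

theorem posSemidefSqrt_isHermitian (hA : A.PosSemidef) : (posSemidefSqrt hA).IsHermitian := by
  rw [posSemidefSqrt_eq_cfc]
  exact cfc_predicate _ _

theorem rangeProj_isHermitian (hA : A.IsHermitian) : (rangeProj A hA).IsHermitian := by
  rw [rangeProj_eq_cfc]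
  exact cfc_predicate _ _

theorem mul_rangeProj_self (hA : A.IsHermitian) : A * rangeProj A hA = A := by
  rw [rangeProj_eq_cfc]
  nth_rw 1 [← cfc_id' ℝ A hA.isSelfAdjoint]
  rw [← cfc_mul _ _ A (A.continuousOn_spectrum _) (A.continuousOn_spectrum _)]
  conv_rhs => rw [← cfc_id' ℝ A hA.isSelfAdjoint]
  exact cfc_congr fun x _ => by split_ifs with h <;> simp [h]

-- With `0⁻¹ = 0`, `x ↦ (√x)⁻¹` is the pseudoinverse of the square root.
theorem sqrt_mul_inv_sqrt_eq_ite {x : ℝ} (hx : 0 ≤ x) :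
    √x * (√x)⁻¹ = if x = 0 then 0 else 1 := by
  split_ifs with h
  · simp [h]
  · exact mul_inv_cancel₀ (Real.sqrt_ne_zero'.2 (hx.lt_of_ne' h))

theorem posSemidefSqrt_mul_invSqrt (hA : A.PosSemidef) :
    posSemidefSqrt hA * invSqrt A hA.1 = rangeProj A hA.1 := by
  rw [posSemidefSqrt_eq_cfc, invSqrt_eq_cfc, rangeProj_eq_cfc,
    ← cfc_mul _ _ A (A.continuousOn_spectrum _) (A.continuousOn_spectrum _)]
  exact cfc_congr fun x hx => sqrt_mul_inv_sqrt_eq_ite (hA.nonneg_of_mem_spectrum hx)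

theorem invSqrt_mul_posSemidefSqrt (hA : A.PosSemidef) :
    invSqrt A hA.1 * posSemidefSqrt hA = rangeProj A hA.1 := by
  rw [← posSemidefSqrt_mul_invSqrt hA, posSemidefSqrt_eq_cfc, invSqrt_eq_cfc]
  exact (cfc_commute_cfc _ _ A).eq

theorem absCont_posSemidefSqrt (hA : A.PosSemidef) : AbsCont (posSemidefSqrt hA) A := by
  intro ψ hψ
  refine (posSemidefSqrt_isHermitian hA).mulVec_eq_zero_of_mul_self_mulVec_eq_zero ?_
  rwa [posSemidefSqrt_eq_cfc, hA.cfc_sqrt_mul_self]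

theorem mul_rangeProj_of_absCont {M : Matrix (Fin K) (Fin K) ℂ} (hA : A.IsHermitian)
    (h : AbsCont M A) : M * rangeProj A hA = M := by
  have hker : A * (1 - rangeProj A hA) = 0 := by
    rw [Matrix.mul_sub, Matrix.mul_one, mul_rangeProj_self, sub_self]
  have := mul_eq_zero_of_ker_le h hker
  rwa [Matrix.mul_sub, Matrix.mul_one, sub_eq_zero, eq_comm] at this

end SpectralDefs

theorem rnDeriv_rnDeriv_of_absCont {K : ℕ} {ρ σ : Matrix (Fin K) (Fin K) ℂ} (hρ : ρ.PosSemidef)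
    (hσ : σ.PosSemidef) (h : AbsCont ρ σ) (X : Matrix (Fin K) (Fin K) ℂ) :
    rnDeriv ρ σ hρ hσ (rnDeriv σ ρ hσ hρ X) = rangeProj ρ hρ.1 * X * rangeProj ρ hρ.1 := by
  set Sρ := posSemidefSqrt hρ
  set Sσ := posSemidefSqrt hσ
  set Iρ := invSqrt ρ hρ.1
  set Iσ := invSqrt σ hσ.1
  have hSρ : Sρ * rangeProj σ hσ.1 = Sρ :=
    mul_rangeProj_of_absCont hσ.1 ((absCont_posSemidefSqrt hρ).trans h)
  have hSρ' : rangeProj σ hσ.1 * Sρ = Sρ :=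
    (posSemidefSqrt_isHermitian hρ).mul_eq_right_of_mul_eq_left (rangeProj_isHermitian hσ.1) hSρ
  have hleft : Sρ * Iσ * (Sσ * Iρ) = rangeProj ρ hρ.1 := by
    rw [Matrix.mul_assoc, ← Matrix.mul_assoc Iσ, invSqrt_mul_posSemidefSqrt, ← Matrix.mul_assoc,
      hSρ, posSemidefSqrt_mul_invSqrt]
  have hright : Iρ * Sσ * (Iσ * Sρ) = rangeProj ρ hρ.1 := by
    rw [Matrix.mul_assoc, ← Matrix.mul_assoc Sσ, posSemidefSqrt_mul_invSqrt, hSρ',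
      invSqrt_mul_posSemidefSqrt]
  calc rnDeriv ρ σ hρ hσ (rnDeriv σ ρ hσ hρ X)
      = Sρ * Iσ * (Sσ * Iρ) * X * (Iρ * Sσ * (Iσ * Sρ)) := by
        simp only [rnDeriv, Sρ, Sσ, Iρ, Iσ, Matrix.mul_assoc]
    _ = rangeProj ρ hρ.1 * X * rangeProj ρ hρ.1 := by rw [hleft, hright]

theorem rnDeriv_inverse_general
    (K : ℕ) (ρ σ : Matrix (Fin K) (Fin K) ℂ)
    (hρ : ρ.PosSemidef) (hσ : σ.PosSemidef) (heq : EquivDO ρ σ) :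
    (∀ X : Matrix (Fin K) (Fin K) ℂ,
      rnDeriv ρ σ hρ hσ (rnDeriv σ ρ hσ hρ X) = rangeProj ρ hρ.1 * X * rangeProj ρ hρ.1) ∧
    (∀ τ : Matrix (Fin K) (Fin K) ℂ, τ.IsHermitian → AbsCont τ ρ →
      rnDeriv ρ σ hρ hσ (rnDeriv σ ρ hσ hρ τ) = τ) := by
  refine ⟨rnDeriv_rnDeriv_of_absCont hρ hσ heq.2, fun τ hτ hτρ => ?_⟩
  have hτP : τ * rangeProj ρ hρ.1 = τ := mul_rangeProj_of_absCont hρ.1 hτρ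
  rw [rnDeriv_rnDeriv_of_absCont hρ hσ heq.2,
    hτ.mul_eq_right_of_mul_eq_left (rangeProj_isHermitian hρ.1) hτP, hτP]

/-- Inverse property of the density-operator Radon–Nikodym derivative: if ρ ≈ σ, then
φ(ρ,σ)[φ(σ,ρ)[X]] = Π_+(ρ) X Π_+(ρ) for every X; in particular φ(ρ,σ)[φ(σ,ρ)[τ]] = τ
for every Hermitian τ with τ ≪ ρ. -/
theorem rnDeriv_inverse
    (K : ℕ) (hK : 1 ≤ K) (ρ σ : Matrix (Fin K) (Fin K) ℂ)
    (hρ : ρ.PosSemidef) (hσ : σ.PosSemidef) (heq : EquivDO ρ σ) :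
    (∀ X : Matrix (Fin K) (Fin K) ℂ,
      rnDeriv ρ σ hρ hσ (rnDeriv σ ρ hσ hρ X) = rangeProj ρ hρ.1 * X * rangeProj ρ hρ.1) ∧
    (∀ τ : Matrix (Fin K) (Fin K) ℂ, τ.IsHermitian → AbsCont τ ρ →
      rnDeriv ρ σ hρ hσ (rnDeriv σ ρ hσ hρ τ) = τ) :=
  rnDeriv_inverse_general K ρ σ hρ hσ heq
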